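/- Almost-sure termination via bounded probabilistic variant: let (eₙ) be a stochastic process taking integer values in [0, K] for a constant K ≥ 1, adapted to a filtration, such that whenever eₙ > 0, the conditional probability that e_{n+1} < eₙ given the history is at least ε > 0. Then with probability 1, there exists n with eₙ = 0. -/

import Mathlib

/-!
Call step `j` good if `e` decreases at `j` or is already `0` there. As `e ≤ K`, a path that stays
positive up to time `n + K` cannot make `K` consecutive good steps from time `n`. Pulling out known
factors and using the tower property, the conditional probability given `ℱ n` of `K` good steps is
at least `ε ^ K`. Hence the probability of staying positive up to `n + K` is at most `1 - ε ^ K`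
times that of staying positive up to `n`, which decays geometrically along the times `m * K`.
-/

open MeasureTheory Filter Topology

section

variable {Ω : Type*} {m0 : MeasurableSpace Ω} {P : Measure Ω} [IsFiniteMeasure P]

lemma condExp_indicator_inter_ge_mul {m l : MeasurableSpace Ω} (hml : m ≤ l) (hl : l ≤ m0)
    {A B : Set Ω} (hB : MeasurableSet[l] B) (hA : MeasurableSet[m0] A) {δ ε : ℝ} (hε : 0 ≤ ε)
    (hBδ : ∀ᵐ ω ∂P, δ ≤ P[B.indicator 1 | m] ω) (hAε : ∀ᵐ ω ∂P, ε ≤ P[A.indicator 1 | l] ω) :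
    ∀ᵐ ω ∂P, δ * ε ≤ P[(B ∩ A).indicator 1 | m] ω := by
  have hint : ∀ {s : Set Ω}, MeasurableSet[m0] s → Integrable (s.indicator (1 : Ω → ℝ)) P :=
    fun hs => (integrable_const 1).indicator hs
  have hB0 : MeasurableSet[m0] B := hl _ hB
  have hpull : P[(B ∩ A).indicator (1 : Ω → ℝ) | l] =ᵐ[P] B.indicator 1 * P[A.indicator 1 | l] := by
    rw [Set.inter_indicator_one]
    refine condExp_mul_of_stronglyMeasurable_left (stronglyMeasurable_one.indicator hB) ?_ (hint hA)
    rw [← Set.inter_indicator_one]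
    exact hint (hB0.inter hA)
  have hlower : ε • B.indicator (1 : Ω → ℝ) ≤ᵐ[P] P[(B ∩ A).indicator 1 | l] := by
    filter_upwards [hpull, hAε] with ω hω hωε
    rw [hω]
    by_cases hωB : ω ∈ B <;> simp [hωB, hωε]
  filter_upwards [condExp_mono (m := m) ((hint hB0).smul ε) integrable_condExp hlower,
    condExp_condExp_of_le (μ := P) (f := (B ∩ A).indicator (1 : Ω → ℝ)) hml hl,
    condExp_smul (μ := P) ε (B.indicator (1 : Ω → ℝ)) m, hBδ] with ω hmono htower hsmul hωδ
  calc δ * ε ≤ ε * P[B.indicator 1 | m] ω := by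
        rw [mul_comm]; exact mul_le_mul_of_nonneg_left hωδ hε
    _ = P[ε • B.indicator 1 | m] ω := by rw [hsmul]; rfl
    _ ≤ P[P[(B ∩ A).indicator 1 | l] | m] ω := hmono
    _ = P[(B ∩ A).indicator 1 | m] ω := htower

lemma condExp_indicator_biInter_ge_pow (ℱ : Filtration ℕ m0) {A : ℕ → Set Ω}
    (hA : ∀ j, MeasurableSet[ℱ (j + 1)] (A j)) {ε : ℝ} (hε : 0 ≤ ε)
    (hAε : ∀ j, ∀ᵐ ω ∂P, ε ≤ P[(A j).indicator 1 | ℱ j] ω) (n k : ℕ) :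
    ∀ᵐ ω ∂P, ε ^ k ≤ P[(⋂ i < k, A (n + i)).indicator 1 | ℱ n] ω := by
  induction k with
  | zero =>
    rw [show (1 : Ω → ℝ) = fun _ => 1 from rfl]
    simp [condExp_const (ℱ.le n)]
  | succ k ih =>
    rw [Set.biInter_lt_succ, pow_succ]
    have hmeas : MeasurableSet[ℱ (n + k)] (⋂ i < k, A (n + i)) :=
      .iInter fun i => .iInter fun hi => ℱ.mono (by omega) _ (hA (n + i))
    exact condExp_indicator_inter_ge_mul (ℱ.mono (n.le_add_right k)) (ℱ.le _) hmeas
      (ℱ.le _ _ (hA (n + k))) hε ih (hAε (n + k))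

lemma mul_measureReal_le_measureReal_inter {m : MeasurableSpace Ω} (hm : m ≤ m0) {s D : Set Ω}
    (hs : MeasurableSet[m] s) (hD : MeasurableSet[m0] D) {δ : ℝ}
    (hδ : ∀ᵐ ω ∂P, δ ≤ P[D.indicator 1 | m] ω) : δ * P.real s ≤ P.real (s ∩ D) :=
  calc δ * P.real s = ∫ _ in s, δ ∂P := by rw [setIntegral_const, smul_eq_mul, mul_comm]
    _ ≤ ∫ ω in s, P[D.indicator 1 | m] ω ∂P :=
      setIntegral_mono_ae (integrable_const _).integrableOn integrable_condExp.integrableOn hδ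
    _ = ∫ ω in s, D.indicator 1 ω ∂P :=
      setIntegral_condExp hm ((integrable_const 1).indicator hD) hs
    _ = P.real (s ∩ D) := by
      rw [integral_indicator_one hD, measureReal_restrict_apply hD, Set.inter_comm]

lemma measure_iInter_eq_zero_of_measureReal_add_le {s : ℕ → Set Ω} {K : ℕ} {q : ℝ}
    (hq0 : 0 ≤ q) (hq1 : q < 1) (hs : ∀ n, P.real (s (n + K)) ≤ q * P.real (s n)) :
    P (⋂ n, s n) = 0 := by
  have hgeo : ∀ m, P.real (s (m * K)) ≤ q ^ m * P.real (s 0) := by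
    intro m
    induction m with
    | zero => simp
    | succ m ih =>
      calc P.real (s ((m + 1) * K)) = P.real (s (m * K + K)) := by rw [Nat.succ_mul]
        _ ≤ q * P.real (s (m * K)) := hs _
        _ ≤ q * (q ^ m * P.real (s 0)) := by gcongr
        _ = q ^ (m + 1) * P.real (s 0) := by ring
  have hlim : Tendsto (fun m => q ^ m * P.real (s 0)) atTop (𝓝 0) := by
    simpa using (tendsto_pow_atTop_nhds_zero_of_lt_one hq0 hq1).mul_const (P.real (s 0))
  have hle : P.real (⋂ n, s n) ≤ 0 :=
    ge_of_tendsto' hlim fun m => (measureReal_mono (Set.iInter_subset _ (m * K))).trans (hgeo m)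
  exact (measureReal_eq_zero_iff (measure_ne_top P _)).1 (le_antisymm hle measureReal_nonneg)

lemma add_le_of_forall_succ_lt {a : ℕ → ℕ} {n k : ℕ} (h : ∀ i < k, a (n + i + 1) < a (n + i)) :
    a (n + k) + k ≤ a n := by
  induction k with
  | zero => simp
  | succ k ih =>
    have hlast := h k k.lt_succ_self
    have hprev := ih fun i hi => h i (hi.trans k.lt_succ_self)
    show a (n + k + 1) + (k + 1) ≤ a n
    omega

section Variant

variable (e : ℕ → Ω → ℕ)

/-- Counting a step from `0` as good makes the one-step bound hold everywhere, not only on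
`{0 < e j}`. -/
def decreasesOrVanishes (j : ℕ) : Set Ω := {ω | e (j + 1) ω < e j ω ∨ e j ω = 0}

def positiveUpTo (n : ℕ) : Set Ω := {ω | ∀ j ≤ n, 0 < e j ω}

variable {e} {ℱ : Filtration ℕ m0}

lemma measurableSet_decreasesOrVanishes (hadapt : ∀ n, Measurable[ℱ n] (e n)) (j : ℕ) :
    MeasurableSet[ℱ (j + 1)] (decreasesOrVanishes e j) := by
  have hj : Measurable[ℱ (j + 1)] (e j) := (hadapt j).mono (ℱ.mono j.le_succ) le_rfl
  exact (measurableSet_lt (hadapt (j + 1)) hj).union (hj (measurableSet_singleton 0))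

lemma measurableSet_positiveUpTo (hadapt : ∀ n, Measurable[ℱ n] (e n)) (n : ℕ) :
    MeasurableSet[ℱ n] (positiveUpTo e n) := by
  simp only [positiveUpTo, Set.ofPred_forall]
  exact .iInter fun j => .iInter fun hj => ((hadapt j).mono (ℱ.mono hj) le_rfl) measurableSet_Ioi

lemma condExp_indicator_decreasesOrVanishes_ge (hadapt : ∀ n, Measurable[ℱ n] (e n))
    {ε : ℝ} (hε : ε ≤ 1) {j : ℕ}
    (hdec : ∀ᵐ ω ∂P, 0 < e j ω →
      ε ≤ P[{ω' | e (j + 1) ω' < e j ω'}.indicator 1 | ℱ j] ω) :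
    ∀ᵐ ω ∂P, ε ≤ P[(decreasesOrVanishes e j).indicator 1 | ℱ j] ω := by
  have hZ : MeasurableSet[ℱ j] {ω | e j ω = 0} := hadapt j (measurableSet_singleton 0)
  have hL : MeasurableSet {ω | e (j + 1) ω < e j ω} :=
    measurableSet_lt ((hadapt _).mono (ℱ.le _) le_rfl) ((hadapt _).mono (ℱ.le _) le_rfl)
  have hD : MeasurableSet (decreasesOrVanishes e j) :=
    ℱ.le _ _ (measurableSet_decreasesOrVanishes hadapt j)
  have hint : ∀ {s : Set Ω}, MeasurableSet s → Integrable (s.indicator (1 : Ω → ℝ)) P :=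
    fun hs => (integrable_const 1).indicator hs
  have hdecrease := condExp_mono (m := ℱ j) (hint hL) (hint hD) <| ae_of_all _ <|
    Set.indicator_le_indicator_of_subset (fun _ h => Or.inl h) fun _ => zero_le_one
  have hvanish := condExp_mono (m := ℱ j) (hint (ℱ.le j _ hZ)) (hint hD) <| ae_of_all _ <|
    Set.indicator_le_indicator_of_subset (fun _ h => Or.inr h) fun _ => zero_le_one
  rw [condExp_of_stronglyMeasurable (ℱ.le j) (stronglyMeasurable_one.indicator hZ)
    (hint (ℱ.le j _ hZ))] at hvanish
  filter_upwards [hdec, hdecrease, hvanish] with ω hω hωdec hωvan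
  rcases (e j ω).eq_zero_or_pos with h0 | hpos
  · calc ε ≤ 1 := hε
      _ = {ω | e j ω = 0}.indicator 1 ω := by simp [h0]
      _ ≤ _ := hωvan
  · exact (hω hpos).trans hωdec

lemma disjoint_positiveUpTo_biInter_decreasesOrVanishes {n K : ℕ} (hbound : ∀ ω, e n ω ≤ K) :
    Disjoint (positiveUpTo e (n + K)) (⋂ i < K, decreasesOrVanishes e (n + i)) := by
  refine Set.disjoint_left.2 fun ω hpos hdesc => ?_
  simp only [Set.mem_iInter] at hdesc
  have hsteps : ∀ i < K, e (n + i + 1) ω < e (n + i) ω := fun i hi =>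
    (hdesc i hi).resolve_right (hpos (n + i) (by omega)).ne'
  have hdrop := add_le_of_forall_succ_lt (a := fun j => e j ω) hsteps
  have hlast := hpos (n + K) le_rfl
  have hfirst := hbound ω
  omega

lemma measureReal_positiveUpTo_add_le (hadapt : ∀ n, Measurable[ℱ n] (e n)) {K : ℕ}
    (hbound : ∀ n ω, e n ω ≤ K) {ε : ℝ} (hε : 0 ≤ ε)
    (hstep : ∀ j, ∀ᵐ ω ∂P, ε ≤ P[(decreasesOrVanishes e j).indicator 1 | ℱ j] ω) (n : ℕ) :
    P.real (positiveUpTo e (n + K)) ≤ (1 - ε ^ K) * P.real (positiveUpTo e n) := by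
  set D := ⋂ i < K, decreasesOrVanishes e (n + i)
  have hD : MeasurableSet D :=
    .iInter fun i => .iInter fun _ => ℱ.le _ _ (measurableSet_decreasesOrVanishes hadapt _)
  have hsub : positiveUpTo e (n + K) ⊆ positiveUpTo e n \ D := fun ω hω =>
    ⟨fun j hj => hω j (by omega),
      Set.disjoint_left.1 (disjoint_positiveUpTo_biInter_decreasesOrVanishes (hbound n)) hω⟩
  have hlow := mul_measureReal_le_measureReal_inter (ℱ.le n) (measurableSet_positiveUpTo hadapt n)
    hD (condExp_indicator_biInter_ge_pow ℱ (measurableSet_decreasesOrVanishes hadapt) hε hstep n K)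
  have hsplit := measureReal_inter_add_sdiff (μ := P) (s := positiveUpTo e n) hD
  have hmono := measureReal_mono (μ := P) hsub
  linarith

end Variant

end

theorem ast_bounded_variant_general {Ω : Type*} {m0 : MeasurableSpace Ω}
    (P : Measure Ω) [IsProbabilityMeasure P]
    (ℱ : Filtration ℕ m0)
    (e : ℕ → Ω → ℕ) (K : ℕ)
    (hadapt : ∀ n, Measurable[ℱ n] (e n))
    (hbound : ∀ n ω, e n ω ≤ K)
    (ε : ℝ) (hε0 : 0 < ε) (hε1 : ε ≤ 1)
    (hdec : ∀ n, ∀ᵐ ω ∂P, 0 < e n ω →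
      ε ≤ (P[Set.indicator {ω' | e (n + 1) ω' < e n ω'}
              (fun _ => (1 : ℝ)) | ℱ n]) ω) :
    P {ω | ∃ n, e n ω = 0} = 1 := by
  have hstep : ∀ j, ∀ᵐ ω ∂P, ε ≤ P[(decreasesOrVanishes e j).indicator 1 | ℱ j] ω :=
    fun j => condExp_indicator_decreasesOrVanishes_ge hadapt hε1 (hdec j)
  have hεK0 : 0 < ε ^ K := pow_pos hε0 K
  have hεK1 : ε ^ K ≤ 1 := pow_le_one₀ hε0.le hε1
  have hnever : P (⋂ n, positiveUpTo e n) = 0 :=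
    measure_iInter_eq_zero_of_measureReal_add_le (by linarith) (by linarith)
      (measureReal_positiveUpTo_add_le hadapt hbound hε0.le hstep)
  have hcompl : {ω | ∃ n, e n ω = 0}ᶜ = ⋂ n, positiveUpTo e n := by
    ext ω
    simp only [positiveUpTo, Set.mem_compl_iff, Set.mem_ofPred_eq, not_exists, Set.mem_iInter,
      Nat.pos_iff_ne_zero]
    exact ⟨fun h _ j _ => h j, fun h n => h n n le_rfl⟩
  have hmeas : MeasurableSet {ω | ∃ n, e n ω = 0} :=
    MeasurableSet.of_compl <| hcompl ▸
      .iInter fun n => ℱ.le n _ (measurableSet_positiveUpTo hadapt n)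
  rw [← prob_compl_eq_zero_iff hmeas, hcompl, hnever]

/-- Almost-sure termination via a bounded probabilistic variant: an adapted
process `e` with values in `{0,…,K}` (`K ≥ 1`) such that, whenever `eₙ > 0`,
the conditional probability (given the past) that `e_{n+1} < eₙ` is at least
`ε > 0`, hits `0` with probability `1`. -/
theorem ast_bounded_variant {Ω : Type*} {m0 : MeasurableSpace Ω}
    (P : Measure Ω) [IsProbabilityMeasure P]
    (ℱ : Filtration ℕ m0)
    (e : ℕ → Ω → ℕ) (K : ℕ) (hK : 1 ≤ K)
    (hadapt : ∀ n, Measurable[ℱ n] (e n))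
    (hbound : ∀ n ω, e n ω ≤ K)
    (ε : ℝ) (hε0 : 0 < ε) (hε1 : ε ≤ 1)
    (hdec : ∀ n, ∀ᵐ ω ∂P, 0 < e n ω →
      ε ≤ (P[Set.indicator {ω' | e (n + 1) ω' < e n ω'}
              (fun _ => (1 : ℝ)) | ℱ n]) ω) :
    P {ω | ∃ n, e n ω = 0} = 1 :=
  ast_bounded_variant_general P ℱ e K hadapt hbound ε hε0 hε1 hdec
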